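/- arXiv:2101.03342 — 5 statements merged into one kernel-verified Lean document; each statement's English description precedes it below -/
import Mathlib

section
/- (Closure of species equivalences under union.) Let R be a reaction network over a species type S, I an index set, and for each i ∈ I let ≈ᵢ be a species equivalence for R. Then the equivalence relation generated by the union ⋃_{i ∈ I} ≈ᵢ (i.e., its reflexive–symmetric–transitive closure) is a species equivalence for R. -/
open Classical

noncomputable section

/-- A reaction of a stochastic mass-action network:
reagent multiset, kinetic parameter, product multiset. -/
structure Reaction (S : Type*) where
  reag : Multiset S
  rate : ℝ
  prod : Multiset S

variable {S : Type*}

/-- `classCount sd s σ` is the cumulative multiplicity in `σ` of the species in the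
≈-equivalence class of `s` (every ≈-class is of this form). -/
def classCount (sd : Setoid S) (s : S) (σ : Multiset S) : ℕ :=
  (σ.filter (sd.r s)).card

/-- The multiset lifting `≈ₗ` of an equivalence relation `≈` on species:
two multisets are related iff they have the same cumulative multiplicity
of every ≈-equivalence class. -/
def mlift (sd : Setoid S) (σ σ' : Multiset S) : Prop :=
  ∀ s : S, classCount sd s σ = classCount sd s σ'

/-- Cumulative multiplicity in `σ` of an ≈-equivalence class given as an
element of the quotient. -/
def classCountQ (sd : Setoid S) (H : Quotient sd) (σ : Multiset S) : ℕ :=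
  (σ.filter (fun x => Quotient.mk sd x = H)).card

/-- The multiset lifting is itself an equivalence relation on multisets. -/
def mliftSetoid (sd : Setoid S) : Setoid (Multiset S) :=
  ⟨mlift sd, ⟨fun _ _ => rfl, fun h s => (h s).symm, fun h1 h2 s => (h1 s).trans (h2 s)⟩⟩

/-- The set of reagent multisets of a reaction network. -/
def Reags (R : Finset (Reaction S)) : Finset (Multiset S) := R.image Reaction.reag

/-- The set of product multisets of a reaction network. -/
def Prods (R : Finset (Reaction S)) : Finset (Multiset S) := R.image Reaction.prod

/-- Sum of the kinetic parameters of all reactions with reagents `ρ` and products `π`. -/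
def rrOff (R : Finset (Reaction S)) (ρ π : Multiset S) : ℝ :=
  ∑ x ∈ R.filter (fun x => x.reag = ρ ∧ x.prod = π), x.rate

/-- The reaction rate `rr(ρ,π)`: the sum of the kinetic parameters of the reactions from
`ρ` to `π` when `ρ ≠ π`, with diagonal correction `rr(ρ,ρ) = -∑_{π' ∈ Prod(R), π' ≠ ρ} rr(ρ,π')`. -/
def rr (R : Finset (Reaction S)) (ρ π : Multiset S) : ℝ :=
  if ρ = π then -∑ π' ∈ (Prods R).erase ρ, rrOff R ρ π'
  else rrOff R ρ π

/-- Cumulative reaction rate `rr[ρ,B] = ∑_{π ∈ B ∩ (Prod(R) ∪ {ρ})} rr(ρ,π)`. -/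
def rrSet (R : Finset (Reaction S)) (ρ : Multiset S) (B : Set (Multiset S)) : ℝ :=
  ∑ π ∈ (insert ρ (Prods R)).filter (· ∈ B), rr R ρ π

/-- Mass-action propensity of a reaction in state `σ`. -/
def propensity (σ : Multiset S) (x : Reaction S) : ℝ :=
  x.rate * ∏ s ∈ x.reag.toFinset, ((σ.count s).choose (x.reag.count s) : ℝ)

/-- Sum of the propensities in `σ` of all reactions leading from state `σ` to state `θ`. -/
def qOff (R : Finset (Reaction S)) (σ θ : Multiset S) : ℝ :=
  ∑ x ∈ R.filter (fun x => x.reag ≤ σ ∧ σ - x.reag + x.prod = θ), propensity σ x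

/-- The (finitely many) states reachable from `σ` in one reaction. -/
def succs (R : Finset (Reaction S)) (σ : Multiset S) : Finset (Multiset S) :=
  (R.filter (fun x => x.reag ≤ σ)).image (fun x => σ - x.reag + x.prod)

/-- CTMC transition rate `q(σ,θ)` of the Markov chain of the network, with the
convention `q(σ,σ) = -∑_{θ ≠ σ} q(σ,θ)`. -/
def q (R : Finset (Reaction S)) (σ θ : Multiset S) : ℝ :=
  if σ = θ then -∑ θ' ∈ (succs R σ).erase σ, qOff R σ θ'
  else qOff R σ θ

/-- Aggregate transition rate `q[σ,B] = ∑_{θ ∈ B} q(σ,θ)` (finitely many nonzero terms). -/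
def qSet (R : Finset (Reaction S)) (σ : Multiset S) (B : Set (Multiset S)) : ℝ :=
  ∑ θ ∈ (insert σ (succs R σ)).filter (· ∈ B), q R σ θ

/-- All kinetic parameters of the network are positive. -/
def posRates (R : Finset (Reaction S)) : Prop := ∀ x ∈ R, 0 < x.rate

/-- Species equivalence (SE): for all related species `s ≈ s'`, every context `ρ` with
`s+ρ` or `s'+ρ` a reagent multiset of `R`, and every ≈ₗ-class containing at least one
product multiset (represented by `π₀ ∈ Prod(R)`), the cumulative reaction rates agree. -/
def isSE (sd : Setoid S) (R : Finset (Reaction S)) : Prop :=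
  ∀ s s' : S, sd.r s s' → ∀ ρ : Multiset S,
    ((s ::ₘ ρ) ∈ Reags R ∨ (s' ::ₘ ρ) ∈ Reags R) →
    ∀ π₀ ∈ Prods R,
      rrSet R (s ::ₘ ρ) {π | mlift sd π₀ π} = rrSet R (s' ::ₘ ρ) {π | mlift sd π₀ π}

/-- `f` is a representative map for the equivalence `sd`. -/
def IsRep (sd : Setoid S) (f : S → S) : Prop :=
  (∀ s : S, sd.r (f s) s) ∧ ∀ s s' : S, sd.r s s' → f s = f s'

/-- The reduced reaction network of `R` by the representative map `f`: one reaction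
`(ρ̂, β, π̂)` for each pair `(ρ̂, π̂)` with `ρ̂ ∈ Reag(R)`, `f(ρ̂) = ρ̂`, `f(π̂) = π̂` and
`β = ∑ { α | (ρ̂,α,π) ∈ R, f(π) = π̂ }` positive. -/
def reduced (R : Finset (Reaction S)) (f : S → S) : Finset (Reaction S) :=
  ((((R.image (fun x => (x.reag, x.prod.map f))).filter
      (fun p => p.1.map f = p.1)).image
    (fun p => (⟨p.1, ∑ x ∈ R.filter (fun x => x.reag = p.1 ∧ x.prod.map f = p.2), x.rate,
      p.2⟩ : Reaction S)))).filter (fun x => 0 < x.rate)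

/-- SMB-reaction rate: sum of parameters with no diagonal correction. -/
def rrSMBSet (R : Finset (Reaction S)) (ρ : Multiset S) (B : Set (Multiset S)) : ℝ :=
  ∑ π ∈ (Prods R).filter (· ∈ B), rrOff R ρ π

/-- Syntactic Markovian bisimulation. -/
def isSMB (sd : Setoid S) (R : Finset (Reaction S)) : Prop :=
  ∀ s s' : S, sd.r s s' → ∀ ρ π₀ : Multiset S,
    rrSMBSet R (s ::ₘ ρ) {π | mlift sd π₀ π} = rrSMBSet R (s' ::ₘ ρ) {π | mlift sd π₀ π}

-- ================== auxiliary ==================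

/-- total rate out of σ (including to σ's own class) -/
def Ttot (R : Finset (Reaction S)) (σ : Multiset S) : ℝ := ∑ π ∈ Prods R, rrOff R σ π

lemma classCount_eq_count (sd : Setoid S) (s : S) (σ : Multiset S) :
    classCount sd s σ = (σ.map (Quotient.mk sd)).count (Quotient.mk sd s) := by
  rw [Multiset.count_map, classCount]
  congr 1
  apply Multiset.filter_congr
  intro x _
  constructor
  · intro h; exact Quotient.sound h
  · intro h; exact Quotient.exact h

lemma mlift_iff (sd : Setoid S) (σ σ' : Multiset S) :
    mlift sd σ σ' ↔ σ.map (Quotient.mk sd) = σ'.map (Quotient.mk sd) := by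
  constructor
  · intro h
    ext a
    induction a using Quotient.inductionOn with
    | h s => rw [← classCount_eq_count, ← classCount_eq_count]; exact h s
  · intro h s
    rw [classCount_eq_count, classCount_eq_count, h]

lemma mlift_mono {sd sd' : Setoid S} (h : sd ≤ sd') {σ σ' : Multiset S}
    (hm : mlift sd σ σ') : mlift sd' σ σ' := by
  rw [mlift_iff] at hm ⊢
  have hc : (Quotient.mk sd' : S → Quotient sd') =
      (Quotient.lift (Quotient.mk sd') (fun a b hab => Quotient.sound (Setoid.le_def.mp h hab)))
        ∘ (Quotient.mk sd) := rfl
  rw [hc, ← Multiset.map_map, ← Multiset.map_map, hm]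

lemma mlift_cons (sd : Setoid S) {s s' : S} (h : sd.r s s') (ρ : Multiset S) :
    mlift sd (s ::ₘ ρ) (s' ::ₘ ρ) := by
  rw [mlift_iff]
  simp only [Multiset.map_cons]
  rw [Quotient.sound h]

lemma mlift_refl (sd : Setoid S) (σ : Multiset S) : mlift sd σ σ := fun _ => rfl
lemma mlift_symm {sd : Setoid S} {σ σ' : Multiset S} (h : mlift sd σ σ') : mlift sd σ' σ :=
  fun s => (h s).symm
lemma mlift_trans {sd : Setoid S} {σ σ' σ'' : Multiset S} (h1 : mlift sd σ σ')
    (h2 : mlift sd σ' σ'') : mlift sd σ σ'' := fun s => (h1 s).trans (h2 s)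

lemma rrOff_eq_zero {R : Finset (Reaction S)} {σ : Multiset S} (h : σ ∉ Reags R)
    (π : Multiset S) : rrOff R σ π = 0 := by
  apply Finset.sum_eq_zero
  intro x hx
  rw [Finset.mem_filter] at hx
  exact absurd (Finset.mem_image.mpr ⟨x, hx.1, hx.2.1⟩) h

lemma rr_eq_zero {R : Finset (Reaction S)} {σ : Multiset S} (h : σ ∉ Reags R)
    (π : Multiset S) : rr R σ π = 0 := by
  rw [rr]
  split
  · rw [Finset.sum_congr rfl (fun π' _ => rrOff_eq_zero h π'), Finset.sum_const_zero, neg_zero]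
  · exact rrOff_eq_zero h π

lemma rrSet_eq_zero {R : Finset (Reaction S)} {σ : Multiset S} (h : σ ∉ Reags R)
    (B : Set (Multiset S)) : rrSet R σ B = 0 :=
  Finset.sum_eq_zero (fun π _ => rr_eq_zero h π)

/-- unconditional form of the SE property -/
lemma se_apply {R : Finset (Reaction S)} {sd : Setoid S} (hse : isSE sd R) {s s' : S}
    (h : sd.r s s') (ρ : Multiset S) {π₀ : Multiset S} (hπ₀ : π₀ ∈ Prods R) :
    rrSet R (s ::ₘ ρ) {π | mlift sd π₀ π} = rrSet R (s' ::ₘ ρ) {π | mlift sd π₀ π} := by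
  by_cases h1 : (s ::ₘ ρ) ∈ Reags R ∨ (s' ::ₘ ρ) ∈ Reags R
  · exact hse s s' h ρ h1 π₀ hπ₀
  · push_neg at h1
    rw [rrSet_eq_zero h1.1, rrSet_eq_zero h1.2]

/-- decomposition of rrSet -/
lemma rrSet_eq (R : Finset (Reaction S)) (σ : Multiset S) (B : Set (Multiset S)) :
    rrSet R σ B = rrSMBSet R σ B - (if σ ∈ B then Ttot R σ else 0) := by
  classical
  by_cases hσ : σ ∈ B
  · rw [if_pos hσ]
    rw [rrSet, Finset.filter_insert, if_pos hσ]
    by_cases hP : σ ∈ (Prods R).filter (· ∈ B)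
    · rw [Finset.insert_eq_self.mpr hP]
      rw [← Finset.sum_erase_add _ _ hP]
      have h1 : ∑ π ∈ ((Prods R).filter (· ∈ B)).erase σ, rr R σ π
          = ∑ π ∈ ((Prods R).filter (· ∈ B)).erase σ, rrOff R σ π := by
        apply Finset.sum_congr rfl
        intro π hπ
        rw [rr, if_neg (Ne.symm (Finset.mem_erase.mp hπ).1)]
      have h2 : rr R σ σ = -∑ π' ∈ (Prods R).erase σ, rrOff R σ π' := by rw [rr, if_pos rfl]
      have hPP : σ ∈ Prods R := (Finset.mem_filter.mp hP).1
      have h3 : ∑ π ∈ ((Prods R).filter (· ∈ B)).erase σ, rrOff R σ π + rrOff R σ σ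
          = rrSMBSet R σ B := Finset.sum_erase_add _ _ hP
      have h4 : ∑ π' ∈ (Prods R).erase σ, rrOff R σ π' + rrOff R σ σ = Ttot R σ :=
        Finset.sum_erase_add _ _ hPP
      rw [h1, h2]
      linarith
    · rw [Finset.sum_insert hP]
      have h2 : rr R σ σ = -∑ π' ∈ (Prods R).erase σ, rrOff R σ π' := by rw [rr, if_pos rfl]
      have hPP : σ ∉ Prods R := fun hc => hP (Finset.mem_filter.mpr ⟨hc, hσ⟩)
      have h4 : (Prods R).erase σ = Prods R := Finset.erase_eq_of_notMem hPP
      have h1 : ∑ π ∈ (Prods R).filter (· ∈ B), rr R σ π = rrSMBSet R σ B := by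
        apply Finset.sum_congr rfl
        intro π hπ
        have hne : σ ≠ π := by
          intro hc
          exact hPP (hc ▸ (Finset.mem_filter.mp hπ).1)
        rw [rr, if_neg hne]
      rw [h1, h2, h4]
      rw [Ttot]
      ring
  · rw [if_neg hσ, sub_zero]
    rw [rrSet, Finset.filter_insert, if_neg hσ]
    apply Finset.sum_congr rfl
    intro π hπ
    have hne : σ ≠ π := by
      intro hc
      exact hσ (hc ▸ (Finset.mem_filter.mp hπ).2)
    rw [rr, if_neg hne]

/-- saturation of a set of states under an mlift -/
def Sat (sd : Setoid S) (B : Set (Multiset S)) : Prop :=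
  ∀ π π', π ∈ B → mlift sd π π' → π' ∈ B

lemma rrSMBSet_union (R : Finset (Reaction S)) (τ : Multiset S) {C D : Set (Multiset S)}
    (h : ∀ π, ¬ (π ∈ C ∧ π ∈ D)) :
    rrSMBSet R τ (C ∪ D) = rrSMBSet R τ C + rrSMBSet R τ D := by
  classical
  rw [rrSMBSet, rrSMBSet, rrSMBSet, ← Finset.sum_union]
  · apply Finset.sum_congr _ (fun _ _ => rfl)
    ext π
    simp only [Finset.mem_filter, Finset.mem_union, Set.mem_union]
    tauto
  · rw [Finset.disjoint_filter]
    intro π _ hC hD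
    exact h π ⟨hC, hD⟩

lemma rrSMBSet_univ (R : Finset (Reaction S)) (τ : Multiset S) :
    rrSMBSet R τ Set.univ = Ttot R τ := by
  rw [rrSMBSet, Ttot]
  apply Finset.sum_congr _ (fun _ _ => rfl)
  ext π
  simp

lemma claim1 {R : Finset (Reaction S)} {sd : Setoid S} (hse : isSE sd R) {s s' : S}
    (hss : sd.r s s') (ρ : Multiset S) (B : Set (Multiset S)) (hB : Sat sd B)
    (hσ : (s ::ₘ ρ) ∉ B) :
    rrSMBSet R (s ::ₘ ρ) B = rrSMBSet R (s' ::ₘ ρ) B := by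
  classical
  have hml : mlift sd (s ::ₘ ρ) (s' ::ₘ ρ) := mlift_cons sd hss ρ
  have hσ' : (s' ::ₘ ρ) ∉ B := fun h => hσ (hB _ _ h (mlift_symm hml))
  set F := (Prods R).filter (· ∈ B) with hF
  have grp : ∀ τ : Multiset S, rrSMBSet R τ B =
      ∑ c ∈ F.image (Quotient.mk (mliftSetoid sd)),
        ∑ π ∈ F.filter (fun π => Quotient.mk (mliftSetoid sd) π = c), rrOff R τ π := by
    intro τ
    rw [rrSMBSet, ← hF]
    exact (Finset.sum_fiberwise_of_maps_to (fun π hπ => Finset.mem_image_of_mem _ hπ) _).symm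
  rw [grp, grp]
  apply Finset.sum_congr rfl
  intro c hc
  obtain ⟨π₀, hπ₀F, hπ₀c⟩ := Finset.mem_image.mp hc
  have hπ₀P : π₀ ∈ Prods R := (Finset.mem_filter.mp hπ₀F).1
  have hπ₀B : π₀ ∈ B := (Finset.mem_filter.mp hπ₀F).2
  have hfiber : F.filter (fun π => Quotient.mk (mliftSetoid sd) π = c)
      = (Prods R).filter (· ∈ {π | mlift sd π₀ π}) := by
    ext π
    simp only [hF, Finset.mem_filter, Set.mem_setOf_eq, and_assoc]
    constructor
    · rintro ⟨hP, hBπ, hcπ⟩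
      exact ⟨hP, mlift_symm (Quotient.exact (hcπ.trans hπ₀c.symm))⟩
    · rintro ⟨hP, hm⟩
      exact ⟨hP, hB _ _ hπ₀B hm,
        (Quotient.sound (mlift_symm hm : (mliftSetoid sd).r π π₀)).trans hπ₀c⟩
  rw [hfiber]
  have hnotin : (s ::ₘ ρ) ∉ {π | mlift sd π₀ π} := fun h => hσ (hB _ _ hπ₀B h)
  have hnotin' : (s' ::ₘ ρ) ∉ {π | mlift sd π₀ π} := fun h => hσ' (hB _ _ hπ₀B h)
  have hkey := se_apply hse hss ρ hπ₀P
  rw [rrSet_eq, rrSet_eq, if_neg hnotin, if_neg hnotin', sub_zero, sub_zero] at hkey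
  exact hkey

lemma claim2 {R : Finset (Reaction S)} {sd : Setoid S} (hse : isSE sd R) {s s' : S}
    (hss : sd.r s s') (ρ : Multiset S) :
    Ttot R (s ::ₘ ρ) - rrSMBSet R (s ::ₘ ρ) {π | mlift sd (s ::ₘ ρ) π}
      = Ttot R (s' ::ₘ ρ) - rrSMBSet R (s' ::ₘ ρ) {π | mlift sd (s' ::ₘ ρ) π} := by
  classical
  have hml : mlift sd (s ::ₘ ρ) (s' ::ₘ ρ) := mlift_cons sd hss ρ
  have hsplit : ∀ τ : Multiset S, Ttot R τ - rrSMBSet R τ {π | mlift sd τ π}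
      = rrSMBSet R τ {π | ¬ mlift sd τ π} := by
    intro τ
    have huniv : ({π | mlift sd τ π} : Set (Multiset S)) ∪ {π | ¬ mlift sd τ π} = Set.univ := by
      ext π
      simp only [Set.mem_union, Set.mem_setOf_eq, Set.mem_univ, iff_true]
      exact Classical.em _
    have := rrSMBSet_union R τ (C := {π | mlift sd τ π}) (D := {π | ¬ mlift sd τ π})
      (fun π h => h.2 h.1)
    rw [huniv, rrSMBSet_univ] at this
    linarith
  rw [hsplit, hsplit]
  have hsame : {π | ¬ mlift sd (s ::ₘ ρ) π} = {π | ¬ mlift sd (s' ::ₘ ρ) π} := by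
    ext π
    simp only [Set.mem_setOf_eq]
    constructor
    · intro h hm; exact h (mlift_trans hml hm)
    · intro h hm; exact h (mlift_trans (mlift_symm hml) hm)
  rw [← hsame]
  apply claim1 hse hss ρ _ _ ?hout
  · intro π π' hπ hm hm'
    exact hπ (mlift_trans hm' (mlift_symm hm))
  · intro h
    rw [Set.mem_setOf_eq] at h
    exact h (mlift_refl sd _)

lemma step {R : Finset (Reaction S)} {sd : Setoid S} (hse : isSE sd R) {s s' : S}
    (hss : sd.r s s') (ρ : Multiset S) (B : Set (Multiset S)) (hB : Sat sd B) :
    rrSet R (s ::ₘ ρ) B = rrSet R (s' ::ₘ ρ) B := by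
  classical
  have hml : mlift sd (s ::ₘ ρ) (s' ::ₘ ρ) := mlift_cons sd hss ρ
  rw [rrSet_eq, rrSet_eq]
  by_cases hσ : (s ::ₘ ρ) ∈ B
  · have hσ' : (s' ::ₘ ρ) ∈ B := hB _ _ hσ hml
    rw [if_pos hσ, if_pos hσ']
    have hsplitB : ∀ τ : Multiset S, τ ∈ B → rrSMBSet R τ B
        = rrSMBSet R τ (B ∩ {π | ¬ mlift sd τ π}) + rrSMBSet R τ {π | mlift sd τ π} := by
      intro τ hτ
      have hBeq : B = (B ∩ {π | ¬ mlift sd τ π}) ∪ {π | mlift sd τ π} := by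
        ext π
        simp only [Set.mem_union, Set.mem_inter_iff, Set.mem_setOf_eq]
        constructor
        · intro hπ
          by_cases hm : mlift sd τ π
          · exact Or.inr hm
          · exact Or.inl ⟨hπ, hm⟩
        · rintro (⟨hπ, _⟩ | hm)
          · exact hπ
          · exact hB _ _ hτ hm
      conv_lhs => rw [hBeq]
      exact rrSMBSet_union R τ (fun π h => h.1.2 h.2)
    rw [hsplitB _ hσ, hsplitB _ hσ']
    have hBsame : B ∩ {π | ¬ mlift sd (s ::ₘ ρ) π} = B ∩ {π | ¬ mlift sd (s' ::ₘ ρ) π} := by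
      ext π
      simp only [Set.mem_inter_iff, Set.mem_setOf_eq, and_congr_right_iff]
      intro _
      constructor
      · intro h hm; exact h (mlift_trans hml hm)
      · intro h hm; exact h (mlift_trans (mlift_symm hml) hm)
    have h1 : rrSMBSet R (s ::ₘ ρ) (B ∩ {π | ¬ mlift sd (s ::ₘ ρ) π})
        = rrSMBSet R (s' ::ₘ ρ) (B ∩ {π | ¬ mlift sd (s ::ₘ ρ) π}) := by
      apply claim1 hse hss ρ _ ?hsat ?hout
      · intro π π' hπ hm
        refine ⟨hB _ _ hπ.1 hm, fun hm' => hπ.2 (mlift_trans hm' (mlift_symm hm))⟩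
      · intro h
        exact h.2 (mlift_refl sd _)
    have h2 := claim2 hse hss ρ (R := R)
    rw [hBsame] at h1
    rw [hBsame]
    linarith
  · have hσ' : (s' ::ₘ ρ) ∉ B := fun h => hσ (hB _ _ h (mlift_symm hml))
    rw [if_neg hσ, if_neg hσ', sub_zero, sub_zero]
    exact claim1 hse hss ρ B hB hσ


/-- closure of species equivalences under union: the equivalence relation
generated by the union of a family of species equivalences (its reflexive–symmetric–
transitive closure, i.e. the supremum in the lattice of setoids) is a species equivalence. -/
theorem isSE_iSup (R : Finset (Reaction S)) (hpos : posRates R)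
    {I : Type*} (e : I → Setoid S) (h : ∀ i : I, isSE (e i) R) :
    isSE (⨆ i : I, e i) R := by
  classical
  have tEquiv : Equivalence (fun s s' : S =>
      (⨆ i : I, e i).r s s' ∧ ∀ ρ : Multiset S, ∀ B : Set (Multiset S), Sat (⨆ i : I, e i) B →
        rrSet R (s ::ₘ ρ) B = rrSet R (s' ::ₘ ρ) B) := by
    constructor
    · exact fun s => ⟨(⨆ i : I, e i).iseqv.refl s, fun _ _ _ => rfl⟩
    · rintro s s' ⟨h1, h2⟩
      exact ⟨(⨆ i : I, e i).iseqv.symm h1, fun ρ B hB => (h2 ρ B hB).symm⟩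
    · rintro s s' s'' ⟨h1, h2⟩ ⟨h1', h2'⟩
      exact ⟨(⨆ i : I, e i).iseqv.trans h1 h1', fun ρ B hB => (h2 ρ B hB).trans (h2' ρ B hB)⟩
  have hle : (⨆ i : I, e i) ≤ (⟨_, tEquiv⟩ : Setoid S) := by
    apply iSup_le
    intro i
    rw [Setoid.le_def]
    intro s s' hss
    refine ⟨Setoid.le_def.mp (le_iSup e i) hss, ?_⟩
    intro ρ B hBsat
    apply step (h i) hss ρ B
    intro π π' hπ hm
    exact hBsat π π' hπ (mlift_mono (le_iSup e i) hm)
  intro s s' hss ρ _ π₀ hπ₀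
  have ht := Setoid.le_def.mp hle hss
  apply ht.2 ρ
  intro π π' hπ hm
  exact mlift_trans hπ hm


end
end

section
/- (Parameter-encoding network expansion rescales rates uniformly.) Let R be a reaction network over a species type S whose reactions are indexed as (ρᵢ, αᵢ, πᵢ) for i ∈ Fin k, with each αᵢ a positive rational, and let L be a positive integer such that L·αᵢ is a natural number for every i. Define the expanded network R' over the species type S ⊕ Fin k, whose i-th reaction is (Pᵢ + ρᵢ, 1, πᵢ + Pᵢ), where Pᵢ denotes the singleton multiset of the auxiliary species indexed by i (reagents and products of R embedded via the left injection). Let κ be the multiset over S ⊕ Fin k containing each auxiliary species i with multiplicity L·αᵢ. Then for all states σ, θ over S with σ ≠ θ, the transition rate of R' satisfies q_{R'}(σ + κ, θ + κ) = L · q_R(σ, θ). -/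
open Classical

noncomputable section

variable {S : Type*}

/-- parameter-encoding network expansion rescales rates uniformly:
encoding each kinetic parameter `αᵢ` as an extra species `Pᵢ` with initial multiplicity
`L·αᵢ` yields, between states extended by `κ`, transition rates `L` times those of the
original network. -/
theorem q_expanded_eq_mul (S : Type*) (k : ℕ) (ρ π : Fin k → Multiset S)
    (α : Fin k → ℚ) (hα : ∀ i, 0 < α i) (L : ℕ) (hL : 0 < L)
    (n : Fin k → ℕ) (hn : ∀ i, (L : ℚ) * α i = (n i : ℚ))
    (hinj : Function.Injective
      (fun i : Fin k => (⟨ρ i, ((α i : ℝ)), π i⟩ : Reaction S))) :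
    ∀ σ θ : Multiset S, σ ≠ θ →
      q ((Finset.univ : Finset (Fin k)).image (fun i =>
            (⟨(Sum.inr i) ::ₘ (ρ i).map Sum.inl, 1,
              (Sum.inr i) ::ₘ (π i).map Sum.inl⟩ : Reaction (S ⊕ Fin k))))
        (σ.map Sum.inl + ∑ i : Fin k, Multiset.replicate (n i) (Sum.inr i))
        (θ.map Sum.inl + ∑ i : Fin k, Multiset.replicate (n i) (Sum.inr i))
      = (L : ℝ) *
          q ((Finset.univ : Finset (Fin k)).image (fun i =>
              (⟨ρ i, ((α i : ℝ)), π i⟩ : Reaction S))) σ θ := by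
  classical
  intro σ θ hst
  letI : DecidableEq (S ⊕ Fin k) := fun a b => Classical.propDecidable (a = b)
  letI : DecidableEq S := fun a b => Classical.propDecidable (a = b)
  have hinl : Function.Injective (Sum.inl : S → S ⊕ Fin k) := Sum.inl_injective
  set κ : Multiset (S ⊕ Fin k) := ∑ i : Fin k, Multiset.replicate (n i) (Sum.inr i) with hκ
  have hκr : ∀ j : Fin k, κ.count (Sum.inr j) = n j := by
    intro j
    rw [hκ, Multiset.count_sum']
    rw [Finset.sum_eq_single j]
    · simp
    · intro b _ hb; simp [Multiset.count_replicate, hb]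
    · simp
  have hκl : ∀ s : S, κ.count (Sum.inl s) = 0 := by
    intro s; rw [hκ, Multiset.count_sum']
    exact Finset.sum_eq_zero fun b _ => by simp [Multiset.count_replicate]
  have hcl : ∀ (s : S) (m : Multiset S),
      (m.map Sum.inl).count (Sum.inl s : S ⊕ Fin k) = m.count s :=
    fun s m => Multiset.count_map_eq_count' _ _ hinl s
  have hcr : ∀ (j : Fin k) (m : Multiset S), (m.map Sum.inl).count (Sum.inr j) = 0 := by
    intro j m; simp [Multiset.count_eq_zero]
  have hnpos : ∀ i, 0 < n i := by
    intro i
    have h1 : (0 : ℚ) < (n i : ℚ) := by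
      rw [← hn i]
      exact mul_pos (by exact_mod_cast hL) (hα i)
    exact_mod_cast h1
  have hnR : ∀ i, (n i : ℝ) = (L : ℝ) * (α i : ℝ) := by
    intro i
    have := hn i
    exact_mod_cast this.symm
  set f : Fin k → Reaction (S ⊕ Fin k) := fun i =>
    ⟨(Sum.inr i) ::ₘ (ρ i).map Sum.inl, 1, (Sum.inr i) ::ₘ (π i).map Sum.inl⟩ with hf
  set g : Fin k → Reaction S := fun i => ⟨ρ i, ((α i : ℝ)), π i⟩ with hg
  have hfinj : Function.Injective f := by
    intro i j h
    have h1 : (f i).reag = (f j).reag := by rw [h]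
    have h2 : (Sum.inr i : S ⊕ Fin k) ∈ (f j).reag := by rw [← h1]; simp [hf]
    simp [hf] at h2
    exact h2
  have hle : ∀ i, ((Sum.inr i) ::ₘ (ρ i).map Sum.inl ≤ σ.map Sum.inl + κ) ↔ ρ i ≤ σ := by
    intro i
    rw [Multiset.le_iff_count, Multiset.le_iff_count]
    constructor
    · intro h s
      have := h (Sum.inl s)
      simpa [Multiset.count_cons, Multiset.count_add, hκl, hcl] using this
    · intro h a
      rcases a with s | j
      · simpa [Multiset.count_cons, Multiset.count_add, hκl, hcl] using h s
      · simp only [Multiset.count_cons, Multiset.count_add, hκr, hcr]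
        have := hnpos j
        split <;> omega
  have hupd : ∀ i, ρ i ≤ σ →
      (σ.map Sum.inl + κ) - ((Sum.inr i) ::ₘ (ρ i).map Sum.inl)
          + ((Sum.inr i) ::ₘ (π i).map Sum.inl)
        = (σ - ρ i + π i).map Sum.inl + κ := by
    intro i hρσ
    ext a
    rcases a with s | j
    · have := Multiset.le_iff_count.mp hρσ s
      simp only [Multiset.count_add, Multiset.count_sub, Multiset.count_cons, hκl, hcl,
        reduceCtorEq, if_false]
      omega
    · have := hnpos j
      simp only [Multiset.count_add, Multiset.count_sub, Multiset.count_cons, hκr, hcr]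
      split <;> omega
  have hcond : ∀ i, ((f i).reag ≤ σ.map Sum.inl + κ ∧
        (σ.map Sum.inl + κ) - (f i).reag + (f i).prod = θ.map Sum.inl + κ)
      ↔ ((g i).reag ≤ σ ∧ σ - (g i).reag + (g i).prod = θ) := by
    intro i
    simp only [hf, hg]
    constructor
    · rintro ⟨h1, h2⟩
      have hρσ := (hle i).mp h1
      refine ⟨hρσ, ?_⟩
      rw [hupd i hρσ] at h2
      exact Multiset.map_injective hinl (add_right_cancel h2)
    · rintro ⟨h1, h2⟩
      refine ⟨(hle i).mpr h1, ?_⟩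
      rw [hupd i h1, h2]
  have hprop : ∀ i, propensity (σ.map Sum.inl + κ) (f i) = (L : ℝ) * propensity σ (g i) := by
    intro i
    simp only [hf, hg, propensity]
    rw [Multiset.toFinset_cons, Finset.prod_insert (by simp)]
    have h1 : ((σ.map Sum.inl + κ).count (Sum.inr i)) = n i := by
      simp [Multiset.count_add, hκr, hcr]
    have h2 : (((Sum.inr i : S ⊕ Fin k) ::ₘ (ρ i).map Sum.inl).count (Sum.inr i)) = 1 := by
      simp [Multiset.count_cons, hcr]
    rw [h1, h2, Nat.choose_one_right]
    rw [Multiset.toFinset_map, Finset.prod_image (fun x _ y _ h => hinl h)]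
    have h3 : ∀ s ∈ (ρ i).toFinset,
        (((σ.map Sum.inl + κ).count (Sum.inl s)).choose
          (((Sum.inr i : S ⊕ Fin k) ::ₘ (ρ i).map Sum.inl).count (Sum.inl s)) : ℝ)
        = ((σ.count s).choose ((ρ i).count s) : ℝ) := by
      intro s _
      simp [Multiset.count_add, Multiset.count_cons, hκl, hcl]
    rw [Finset.prod_congr rfl h3, hnR i]
    ring
  have hne2 : σ.map Sum.inl + κ ≠ θ.map Sum.inl + κ := fun h =>
    hst (Multiset.map_injective hinl (add_right_cancel h))
  unfold q qOff
  rw [if_neg hne2, if_neg hst]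
  rw [Finset.filter_image, Finset.filter_image]
  rw [Finset.sum_image (fun x _ y _ h => hfinj h), Finset.sum_image (fun x _ y _ h => hinj h)]
  rw [Finset.mul_sum]
  refine Finset.sum_congr ?_ fun i _ => hprop i
  ext j
  simp only [Finset.mem_filter, Finset.mem_univ, true_and]
  exact hcond j


end
end

section
/- (SE of the SIS epidemic on a star network with heterogeneous rates.) Let γ₁, γ₂, β₁, β₂ be positive reals and consider the reaction network over the ten species S₀, S₁, S₂, S₃, S₄, I₀, I₁, I₂, I₃, I₄ with reactions: I₀ →(γ₁) S₀; Iⱼ →(γ₂) Sⱼ for j = 1,2,3,4; S₀ + Iⱼ →(β₁) I₀ + Iⱼ for j = 1,2,3,4; and Sⱼ + I₀ →(β₂) Iⱼ + I₀ for j = 1,2,3,4. Then the equivalence relation on species whose classes are {S₀}, {I₀}, {S₁, S₂, S₃, S₄}, {I₁, I₂, I₃, I₄} is a species equivalence for this network. -/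
open Classical

noncomputable section

variable {S : Type*}

/-- Species of the SIS model on the 5-node star network: `(false, j)` is the susceptible
species `Sⱼ` and `(true, j)` the infected species `Iⱼ` of node `j`. -/
abbrev StarSp : Type := Bool × Fin 5

/-- The equivalence relation on the star-SIS species whose classes are
`{S₀}`, `{I₀}`, `{S₁,S₂,S₃,S₄}` and `{I₁,I₂,I₃,I₄}`. -/
def starSetoid : Setoid StarSp :=
  Setoid.ker (fun x : StarSp => (x.1, x.2 = (0 : Fin 5)))

-- ===== automorphism lemmas =====

theorem classCount_map_eq (sd : Setoid S) (g : S → S) (hcls : ∀ s, sd.r (g s) s)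
    (s : S) (σ : Multiset S) : classCount sd s (σ.map g) = classCount sd s σ := by
  unfold classCount
  rw [Multiset.filter_map, Multiset.card_map]
  refine congrArg _ (Multiset.filter_congr (fun a _ => ?_))
  constructor
  · exact fun h => sd.iseqv.trans h (hcls a)
  · exact fun h => sd.iseqv.trans h (sd.iseqv.symm (hcls a))

theorem mlift_map_iff (sd : Setoid S) (g : S → S) (hcls : ∀ s, sd.r (g s) s)
    (π₀ σ : Multiset S) : mlift sd π₀ (σ.map g) ↔ mlift sd π₀ σ := by
  unfold mlift
  simp [classCount_map_eq sd g hcls]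

variable (sd : Setoid S) (R : Finset (Reaction S)) (g : S → S)

theorem rrSet_map_eq (hinv : ∀ s, g (g s) = s) (hcls : ∀ s, sd.r (g s) s)
    (hR : ∀ x : Reaction S, x ∈ R →
      (⟨x.reag.map g, x.rate, x.prod.map g⟩ : Reaction S) ∈ R)
    (ρ π₀ : Multiset S) :
    rrSet R (ρ.map g) {π | mlift sd π₀ π} = rrSet R ρ {π | mlift sd π₀ π} := by
  have hginj : Function.Injective g := Function.LeftInverse.injective hinv
  have hMinv : ∀ σ : Multiset S, (σ.map g).map g = σ := by
    intro σ
    rw [Multiset.map_map]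
    calc σ.map (g ∘ g) = σ.map id := Multiset.map_congr rfl (fun x _ => hinv x)
    _ = σ := Multiset.map_id σ
  have hMinj : Function.Injective (Multiset.map g) := Multiset.map_injective hginj
  have hProds : ∀ π : Multiset S, π ∈ Prods R ↔ π.map g ∈ Prods R := by
    intro π
    constructor
    · intro h
      obtain ⟨x, hx, hxp⟩ := Finset.mem_image.1 h
      exact Finset.mem_image.2 ⟨_, hR x hx, by simp [hxp]⟩
    · intro h
      obtain ⟨x, hx, hxp⟩ := Finset.mem_image.1 h
      refine Finset.mem_image.2 ⟨_, hR x hx, ?_⟩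
      show x.prod.map g = π
      rw [hxp, hMinv]
  have hrrOff : ∀ ρ' π : Multiset S, rrOff R (ρ'.map g) (π.map g) = rrOff R ρ' π := by
    intro ρ' π
    unfold rrOff
    refine (Finset.sum_nbij' (fun x => (⟨x.reag.map g, x.rate, x.prod.map g⟩ : Reaction S))
      (fun x => (⟨x.reag.map g, x.rate, x.prod.map g⟩ : Reaction S)) ?_ ?_ ?_ ?_ ?_).symm
    · intro a ha
      simp only [Finset.mem_filter] at ha ⊢
      exact ⟨hR a ha.1, by rw [ha.2.1], by rw [ha.2.2]⟩
    · intro a ha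
      simp only [Finset.mem_filter] at ha ⊢
      refine ⟨hR a ha.1, ?_, ?_⟩
      · show a.reag.map g = ρ'
        have := congrArg (Multiset.map g) ha.2.1; rwa [hMinv] at this
      · show a.prod.map g = π
        have := congrArg (Multiset.map g) ha.2.2; rwa [hMinv] at this
    · intro a _; simp [hMinv]
    · intro a _; simp [hMinv]
    · intro a _; rfl
  have hrr : ∀ ρ' π : Multiset S, rr R (ρ'.map g) (π.map g) = rr R ρ' π := by
    intro ρ' π
    unfold rr
    simp only [hMinj.eq_iff]
    by_cases h : ρ' = π
    · rw [if_pos h, if_pos h]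
      subst h
      refine congrArg Neg.neg ?_
      refine (Finset.sum_nbij' (Multiset.map g) (Multiset.map g) ?_ ?_ ?_ ?_ ?_).symm
      · intro a ha
        simp only [Finset.mem_erase] at ha ⊢
        exact ⟨fun h => ha.1 (hMinj h), (hProds a).1 ha.2⟩
      · intro a ha
        simp only [Finset.mem_erase] at ha ⊢
        refine ⟨fun h => ha.1 ?_, (hProds a).1 ha.2⟩
        rw [← h, hMinv]
      · intro a _; exact hMinv a
      · intro a _; exact hMinv a
      · intro a _; exact (hrrOff ρ' a).symm
    · rw [if_neg h, if_neg h]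
      exact hrrOff ρ' π
  unfold rrSet
  refine (Finset.sum_nbij' (Multiset.map g) (Multiset.map g) ?_ ?_ ?_ ?_ ?_).symm
  · intro a ha
    simp only [Finset.mem_filter, Finset.mem_insert, Set.mem_setOf_eq] at ha ⊢
    refine ⟨?_, (mlift_map_iff sd g hcls π₀ a).2 ha.2⟩
    rcases ha.1 with h | h
    · left; rw [h]
    · right; exact (hProds a).1 h
  · intro a ha
    simp only [Finset.mem_filter, Finset.mem_insert, Set.mem_setOf_eq] at ha ⊢
    refine ⟨?_, (mlift_map_iff sd g hcls π₀ a).2 ha.2⟩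
    rcases ha.1 with h | h
    · left; rw [h, hMinv]
    · right; exact (hProds a).1 h
  · intro a _; exact hMinv a
  · intro a _; exact hMinv a
  · intro a _; exact (hrr ρ a).symm

section StarAux

def swapIdx (j k : Fin 5) : Fin 5 → Fin 5 := fun m => if m = j then k else if m = k then j else m

def swapSp (j k : Fin 5) : StarSp → StarSp := fun x => (x.1, swapIdx j k x.2)

lemma swapSp_mk (j k : Fin 5) (b : Bool) (m : Fin 5) : swapSp j k (b, m) = (b, swapIdx j k m) := rfl

lemma swapIdx_invol : ∀ j k m : Fin 5, swapIdx j k (swapIdx j k m) = m := by decide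

lemma swapIdx_zero : ∀ j k : Fin 5, j ≠ 0 → k ≠ 0 → swapIdx j k 0 = 0 := by decide

lemma swapIdx_ne_zero : ∀ j k m : Fin 5, j ≠ 0 → k ≠ 0 → m ≠ 0 → swapIdx j k m ≠ 0 := by decide

lemma swapIdx_zero_iff : ∀ j k m : Fin 5, j ≠ 0 → k ≠ 0 → ((swapIdx j k m = 0) ↔ (m = 0)) := by
  decide

lemma swapIdx_self : ∀ j k : Fin 5, swapIdx j k j = k := by decide

lemma fin5cases : ∀ m : Fin 5, m ≠ 0 → m = 1 ∨ m = 2 ∨ m = 3 ∨ m = 4 := by decide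

lemma swapSp_invol (j k : Fin 5) (x : StarSp) : swapSp j k (swapSp j k x) = x := by
  cases x with
  | mk b m => simp [swapSp, swapIdx_invol]

lemma swapSp_cls (j k : Fin 5) (hj : j ≠ 0) (hk : k ≠ 0) (x : StarSp) :
    starSetoid.r (swapSp j k x) x := by
  show ((swapSp j k x).1, (swapSp j k x).2 = 0) = (x.1, x.2 = 0)
  exact Prod.ext rfl (propext (swapIdx_zero_iff j k x.2 hj hk))

def RStar (g1 g2 b1 b2 : ℝ) : Finset (Reaction StarSp) :=
  { ⟨{(true, 0)}, g1, {(false, 0)}⟩,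
    ⟨{(true, 1)}, g2, {(false, 1)}⟩,
    ⟨{(true, 2)}, g2, {(false, 2)}⟩,
    ⟨{(true, 3)}, g2, {(false, 3)}⟩,
    ⟨{(true, 4)}, g2, {(false, 4)}⟩,
    ⟨{(false, 0), (true, 1)}, b1, {(true, 0), (true, 1)}⟩,
    ⟨{(false, 0), (true, 2)}, b1, {(true, 0), (true, 2)}⟩,
    ⟨{(false, 0), (true, 3)}, b1, {(true, 0), (true, 3)}⟩,
    ⟨{(false, 0), (true, 4)}, b1, {(true, 0), (true, 4)}⟩,
    ⟨{(false, 1), (true, 0)}, b2, {(true, 1), (true, 0)}⟩,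
    ⟨{(false, 2), (true, 0)}, b2, {(true, 2), (true, 0)}⟩,
    ⟨{(false, 3), (true, 0)}, b2, {(true, 3), (true, 0)}⟩,
    ⟨{(false, 4), (true, 0)}, b2, {(true, 4), (true, 0)}⟩ }

lemma memA (g1 g2 b1 b2 : ℝ) : ∀ m : Fin 5, m ≠ 0 →
    (⟨{((true : Bool), m)}, g2, {((false : Bool), m)}⟩ : Reaction StarSp) ∈ RStar g1 g2 b1 b2 := by
  intro m hm
  rcases fin5cases m hm with rfl | rfl | rfl | rfl <;> simp [RStar]

lemma memB (g1 g2 b1 b2 : ℝ) : ∀ m : Fin 5, m ≠ 0 →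
    (⟨{((false : Bool), (0 : Fin 5)), ((true : Bool), m)}, b1,
      {((true : Bool), (0 : Fin 5)), ((true : Bool), m)}⟩ : Reaction StarSp)
      ∈ RStar g1 g2 b1 b2 := by
  intro m hm
  rcases fin5cases m hm with rfl | rfl | rfl | rfl <;> simp [RStar]

lemma memC (g1 g2 b1 b2 : ℝ) : ∀ m : Fin 5, m ≠ 0 →
    (⟨{((false : Bool), m), ((true : Bool), (0 : Fin 5))}, b2,
      {((true : Bool), m), ((true : Bool), (0 : Fin 5))}⟩ : Reaction StarSp)
      ∈ RStar g1 g2 b1 b2 := by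
  intro m hm
  rcases fin5cases m hm with rfl | rfl | rfl | rfl <;> simp [RStar]

set_option maxHeartbeats 1000000 in
lemma RStar_closed (g1 g2 b1 b2 : ℝ) (j k : Fin 5) (hj : j ≠ 0) (hk : k ≠ 0) :
    ∀ x ∈ RStar g1 g2 b1 b2,
      (⟨x.reag.map (swapSp j k), x.rate, x.prod.map (swapSp j k)⟩ : Reaction StarSp)
        ∈ RStar g1 g2 b1 b2 := by
  intro x hx
  simp only [RStar, Finset.mem_insert, Finset.mem_singleton] at hx
  rcases hx with rfl | rfl | rfl | rfl | rfl | rfl | rfl | rfl | rfl | rfl | rfl | rfl | rfl <;>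
    simp only [Multiset.insert_eq_cons, Multiset.map_cons, Multiset.map_singleton, swapSp_mk,
      swapIdx_zero j k hj hk] <;>
    first
      | exact memA g1 g2 b1 b2 _ (swapIdx_ne_zero j k _ hj hk (by decide))
      | exact memB g1 g2 b1 b2 _ (swapIdx_ne_zero j k _ hj hk (by decide))
      | exact memC g1 g2 b1 b2 _ (swapIdx_ne_zero j k _ hj hk (by decide))
      | simp [RStar]

end StarAux

set_option maxHeartbeats 1000000 in
/-- SE of the SIS epidemic on a star network with heterogeneous rates. -/
theorem isSE_star_SIS (γ₁ γ₂ β₁ β₂ : ℝ)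
    (hγ₁ : 0 < γ₁) (hγ₂ : 0 < γ₂) (hβ₁ : 0 < β₁) (hβ₂ : 0 < β₂) :
    isSE starSetoid
      ({ ⟨{(true, 0)}, γ₁, {(false, 0)}⟩,
         ⟨{(true, 1)}, γ₂, {(false, 1)}⟩,
         ⟨{(true, 2)}, γ₂, {(false, 2)}⟩,
         ⟨{(true, 3)}, γ₂, {(false, 3)}⟩,
         ⟨{(true, 4)}, γ₂, {(false, 4)}⟩,
         ⟨{(false, 0), (true, 1)}, β₁, {(true, 0), (true, 1)}⟩,
         ⟨{(false, 0), (true, 2)}, β₁, {(true, 0), (true, 2)}⟩,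
         ⟨{(false, 0), (true, 3)}, β₁, {(true, 0), (true, 3)}⟩,
         ⟨{(false, 0), (true, 4)}, β₁, {(true, 0), (true, 4)}⟩,
         ⟨{(false, 1), (true, 0)}, β₂, {(true, 1), (true, 0)}⟩,
         ⟨{(false, 2), (true, 0)}, β₂, {(true, 2), (true, 0)}⟩,
         ⟨{(false, 3), (true, 0)}, β₂, {(true, 3), (true, 0)}⟩,
         ⟨{(false, 4), (true, 0)}, β₂, {(true, 4), (true, 0)}⟩ } :
        Finset (Reaction StarSp)) := by
  intro s s' hss ρ hmem π₀ hπ₀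
  by_cases hEq : s = s'
  · rw [hEq]
  have hss' : (s.1, s.2 = (0 : Fin 5)) = (s'.1, s'.2 = (0 : Fin 5)) := hss
  have h1 : s.1 = s'.1 := congrArg (fun p : Bool × Prop => p.1) hss'
  have h2 : (s.2 = (0 : Fin 5)) = (s'.2 = (0 : Fin 5)) := congrArg (fun p : Bool × Prop => p.2) hss'
  have hs2 : s.2 ≠ 0 := fun h =>
    hEq (Prod.ext h1 (by rw [h, (cast h2 h : s'.2 = 0)]))
  have hs'2 : s'.2 ≠ 0 := fun h =>
    hEq (Prod.ext h1 (by rw [h, (cast h2.symm h : s.2 = 0)]))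
  have hρ0 : ∀ a ∈ ρ, a.2 = (0 : Fin 5) := by
    obtain ⟨t, ht2, h⟩ : ∃ t : StarSp, t.2 ≠ 0 ∧ (t ::ₘ ρ) ∈ Reags
        (RStar γ₁ γ₂ β₁ β₂) := by
      rcases hmem with h | h
      exacts [⟨s, hs2, h⟩, ⟨s', hs'2, h⟩]
    have key : Multiset.countP (fun a : StarSp => ¬ a.2 = 0) ρ = 0 := by
      simp only [Reags, Finset.mem_image, RStar, Finset.mem_insert,
        Finset.mem_singleton] at h
      obtain ⟨x, hx, hxe⟩ := h
      rcases hx with rfl | rfl | rfl | rfl | rfl | rfl | rfl | rfl | rfl | rfl | rfl | rfl | rfl <;>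
      · have hc := congrArg (Multiset.countP (fun a : StarSp => ¬ a.2 = 0)) hxe
        simp only [Multiset.insert_eq_cons, ← Multiset.cons_zero, Multiset.countP_cons,
          Multiset.countP_zero] at hc
        simp [ht2] at hc <;> omega
        
    intro a ha
    exact not_not.1 (Multiset.countP_eq_zero.1 key a ha)
  have hρmap : ρ.map (swapSp s.2 s'.2) = ρ := by
    have hfix : ∀ a ∈ ρ, swapSp s.2 s'.2 a = id a := by
      intro a ha
      cases a with
      | mk b m =>
        have hm : m = 0 := hρ0 (b, m) ha
        subst hm
        rw [swapSp_mk, swapIdx_zero _ _ hs2 hs'2]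
        rfl
    rw [Multiset.map_congr rfl hfix, Multiset.map_id]
  have hgs : swapSp s.2 s'.2 s = s' := by
    have : swapSp s.2 s'.2 s = (s.1, swapIdx s.2 s'.2 s.2) := rfl
    rw [this, swapIdx_self]
    exact Prod.ext h1 rfl
  have hmapped : (s ::ₘ ρ).map (swapSp s.2 s'.2) = s' ::ₘ ρ := by
    rw [Multiset.map_cons, hgs, hρmap]
  have hmain := rrSet_map_eq starSetoid (RStar γ₁ γ₂ β₁ β₂) (swapSp s.2 s'.2)
    (swapSp_invol _ _) (swapSp_cls _ _ hs2 hs'2)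
    (RStar_closed γ₁ γ₂ β₁ β₂ s.2 s'.2 hs2 hs'2) (s ::ₘ ρ) π₀
  rw [hmapped] at hmain
  exact hmain.symm


end
end

section
/- (SE of the random-mechanism multisite phosphorylation network.) Fix n ≥ 1 and positive reals r₁, r₂. Let the species type be K ⊕ (Fin n → Bool), where the right summand A(s) encodes the phosphorylation status s of the n sites of a protein and K is a kinase. Consider the reaction network with, for every i : Fin n and every s : Fin n → Bool with s i = false, the reactions A(s) + K →(r₁) A(update s i true) and A(update s i true) →(r₂) A(s) + K. Then the equivalence relation on species that relates K only to itself and relates A(s) to A(s') iff the number of indices i with s i = true equals the number of indices i with s' i = true is a species equivalence for this network. -/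
open Classical

noncomputable section

variable {S : Type*}

/-- The species of the multisite phosphorylation network: the kinase `K` (left summand)
and the protein configurations `A(s)` for `s : Fin n → Bool` (right summand). -/
abbrev PhosSp (n : ℕ) : Type := Unit ⊕ (Fin n → Bool)

/-- The equivalence relating `K` only to itself and `A(s)` to `A(s')` iff `s` and `s'`
have the same number of phosphorylated (true) sites. -/
def phosSetoid (n : ℕ) : Setoid (PhosSp n) :=
  Setoid.ker (Sum.map id
    (fun s : Fin n → Bool => (Finset.univ.filter (fun i : Fin n => s i = true)).card))

/-- The random-mechanism multisite phosphorylation network: for every site `i` and every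
configuration `s` with `s i = false`, the reactions
`A(s) + K →(r₁) A(update s i true)` and `A(update s i true) →(r₂) A(s) + K`. -/
def phosNetwork (n : ℕ) (r₁ r₂ : ℝ) : Finset (Reaction (PhosSp n)) :=
  (((Finset.univ : Finset (Fin n × (Fin n → Bool))).filter (fun p => p.2 p.1 = false)).image
      (fun p => (⟨{Sum.inr p.2, Sum.inl ()}, r₁,
        {Sum.inr (Function.update p.2 p.1 true)}⟩ : Reaction (PhosSp n))))
    ∪ (((Finset.univ : Finset (Fin n × (Fin n → Bool))).filter (fun p => p.2 p.1 = false)).image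
      (fun p => (⟨{Sum.inr (Function.update p.2 p.1 true)}, r₂,
        {Sum.inr p.2, Sum.inl ()}⟩ : Reaction (PhosSp n))))


/-! Two protein configurations with the same number of phosphorylated sites differ by a
permutation of the sites. Renumbering the sites of every protein is an automorphism of the
network that fixes the kinase and preserves every class of the lifted equivalence, so it
preserves cumulative reaction rates. In a reagent a protein occurs only together with kinases,
so the renumbering carries `A(s) + ρ` to `A(s') + ρ`. -/

namespace Reaction

variable {T : Type*}

def map (f : S → T) (x : Reaction S) : Reaction T := ⟨x.reag.map f, x.rate, x.prod.map f⟩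

@[simp] lemma map_reag (f : S → T) (x : Reaction S) : (x.map f).reag = x.reag.map f := rfl

@[simp] lemma map_prod (f : S → T) (x : Reaction S) : (x.map f).prod = x.prod.map f := rfl

def mapEquiv (e : S ≃ T) : Reaction S ≃ Reaction T where
  toFun := map e
  invFun := map e.symm
  left_inv x := by simp [map, Multiset.map_map]
  right_inv x := by simp [map, Multiset.map_map]

@[simp] lemma mapEquiv_apply (e : S ≃ T) (x : Reaction S) : mapEquiv e x = x.map e := rfl

end Reaction

def Equiv.multisetCongr {T : Type*} (e : S ≃ T) : Multiset S ≃ Multiset T where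
  toFun := Multiset.map e
  invFun := Multiset.map e.symm
  left_inv m := by simp [Multiset.map_map]
  right_inv m := by simp [Multiset.map_map]

@[simp] lemma Equiv.multisetCongr_apply {T : Type*} (e : S ≃ T) (m : Multiset S) :
    e.multisetCongr m = m.map e := rfl

section Transport

variable {T : Type*} {R : Finset (Reaction S)} {R' : Finset (Reaction T)} {e : S ≃ T}

lemma map_mem_prods_iff (hR : ∀ x, x.map e ∈ R' ↔ x ∈ R) (π : Multiset S) :
    π.map e ∈ Prods R' ↔ π ∈ Prods R := by
  simp only [Prods, Finset.mem_image]
  constructor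
  · rintro ⟨y, hy, hyπ⟩
    obtain ⟨x, rfl⟩ := (Reaction.mapEquiv e).surjective y
    exact ⟨x, (hR x).1 hy, Multiset.map_injective e.injective hyπ⟩
  · rintro ⟨x, hx, rfl⟩
    exact ⟨x.map e, (hR x).2 hx, rfl⟩

lemma rrOff_map (hR : ∀ x, x.map e ∈ R' ↔ x ∈ R) (ρ π : Multiset S) :
    rrOff R' (ρ.map e) (π.map e) = rrOff R ρ π := by
  refine (Finset.sum_equiv (Reaction.mapEquiv e) (fun x => ?_) (fun _ _ => rfl)).symm
  simp [hR, (Multiset.map_injective e.injective).eq_iff]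

lemma rr_map (hR : ∀ x, x.map e ∈ R' ↔ x ∈ R) (ρ π : Multiset S) :
    rr R' (ρ.map e) (π.map e) = rr R ρ π := by
  simp only [rr, (Multiset.map_injective e.injective).eq_iff]
  split_ifs
  · congr 1
    refine (Finset.sum_equiv e.multisetCongr (fun π' => ?_) (fun π' _ => ?_)).symm
    · simp [map_mem_prods_iff hR, (Multiset.map_injective e.injective).eq_iff]
    · exact (rrOff_map hR ρ π').symm
  · exact rrOff_map hR ρ π

lemma rrSet_map (hR : ∀ x, x.map e ∈ R' ↔ x ∈ R) {B : Set (Multiset S)}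
    {B' : Set (Multiset T)} (hB : ∀ π, π.map e ∈ B' ↔ π ∈ B) (ρ : Multiset S) :
    rrSet R' (ρ.map e) B' = rrSet R ρ B := by
  refine (Finset.sum_equiv e.multisetCongr (fun π => ?_) (fun π _ => (rr_map hR ρ π).symm)).symm
  simp [map_mem_prods_iff hR, (Multiset.map_injective e.injective).eq_iff, hB]

end Transport

lemma mlift_map_right_iff {sd : Setoid S} {f : S → S} (hf : ∀ s, sd.r (f s) s)
    (π₀ π : Multiset S) : mlift sd π₀ (π.map f) ↔ mlift sd π₀ π := by
  have hcount : ∀ s, classCount sd s (π.map f) = classCount sd s π := fun s => by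
    simp only [classCount, Multiset.filter_map, Multiset.card_map]
    congr 1
    exact Multiset.filter_congr fun x _ =>
      ⟨fun h => sd.trans h (hf x), fun h => sd.trans h (sd.symm (hf x))⟩
  simp only [mlift, hcount]

lemma exists_perm_comp_eq_of_card_true_eq {α : Type*} [Fintype α] {u v : α → Bool}
    (h : (Finset.univ.filter (fun i => u i = true)).card
      = (Finset.univ.filter (fun i => v i = true)).card) :
    ∃ τ : Equiv.Perm α, u ∘ τ = v := by
  have hfiber : ∀ c, Fintype.card {i // v i = c} = Fintype.card {i // u i = c} := by
    have htrue : Fintype.card {i // v i = true} = Fintype.card {i // u i = true} := by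
      simpa only [Fintype.card_subtype] using h.symm
    rintro (_ | _)
    · simp only [Bool.eq_false_iff, ne_eq]
      rw [Fintype.card_subtype_compl, Fintype.card_subtype_compl, htrue]
    · exact htrue
  exact ⟨Equiv.ofFiberEquiv fun c => Fintype.equivOfCardEq (hfiber c),
    funext (Equiv.ofFiberEquiv_map _)⟩

section Phosphorylation

variable {n : ℕ}

def relabel (τ : Equiv.Perm (Fin n)) : PhosSp n ≃ PhosSp n :=
  Equiv.sumCongr (Equiv.refl Unit) (τ.symm.arrowCongr (Equiv.refl Bool))

@[simp] lemma relabel_inl (τ : Equiv.Perm (Fin n)) (k : Unit) :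
    relabel τ (Sum.inl k) = Sum.inl k := rfl

@[simp] lemma relabel_inr (τ : Equiv.Perm (Fin n)) (u : Fin n → Bool) :
    relabel τ (Sum.inr u) = Sum.inr (u ∘ τ) := rfl

lemma phosSetoid_inr_iff {u v : Fin n → Bool} :
    (phosSetoid n).r (Sum.inr u) (Sum.inr v) ↔
      (Finset.univ.filter (fun i => u i = true)).card
        = (Finset.univ.filter (fun i => v i = true)).card :=
  Sum.inr_injective.eq_iff

lemma phosSetoid_relabel (τ : Equiv.Perm (Fin n)) (s : PhosSp n) :
    (phosSetoid n).r (relabel τ s) s := by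
  rcases s with k | u
  · rfl
  · exact phosSetoid_inr_iff.2 <| Finset.card_equiv τ (by simp)

lemma map_relabel_mem_phosNetwork {r₁ r₂ : ℝ} (τ : Equiv.Perm (Fin n))
    {x : Reaction (PhosSp n)} (hx : x ∈ phosNetwork n r₁ r₂) :
    x.map (relabel τ) ∈ phosNetwork n r₁ r₂ := by
  simp only [phosNetwork, Finset.mem_union, Finset.mem_image, Finset.mem_filter,
    Finset.mem_univ, true_and, Prod.exists] at hx ⊢
  have hupdate : ∀ (i : Fin n) (s : Fin n → Bool),
      Function.update s i true ∘ τ = Function.update (s ∘ τ) (τ.symm i) true :=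
    fun i s => Function.update_comp_equiv s τ i true
  rcases hx with ⟨i, s, hs, rfl⟩ | ⟨i, s, hs, rfl⟩
  · exact Or.inl ⟨τ.symm i, s ∘ τ, by simpa using hs, by simp [Reaction.map, hupdate]⟩
  · exact Or.inr ⟨τ.symm i, s ∘ τ, by simpa using hs, by simp [Reaction.map, hupdate]⟩

lemma map_relabel_mem_phosNetwork_iff (r₁ r₂ : ℝ) (τ : Equiv.Perm (Fin n))
    (x : Reaction (PhosSp n)) :
    x.map (relabel τ) ∈ phosNetwork n r₁ r₂ ↔ x ∈ phosNetwork n r₁ r₂ := by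
  refine ⟨fun hx => ?_, map_relabel_mem_phosNetwork τ⟩
  convert map_relabel_mem_phosNetwork τ.symm hx
  exact ((Reaction.mapEquiv (relabel τ)).symm_apply_apply x).symm

lemma eq_inl_of_inr_cons_mem_reags {r₁ r₂ : ℝ} {u : Fin n → Bool} {ρ : Multiset (PhosSp n)}
    (h : Sum.inr u ::ₘ ρ ∈ Reags (phosNetwork n r₁ r₂)) : ∀ y ∈ ρ, y = Sum.inl () := by
  simp only [Reags, Finset.mem_image] at h
  obtain ⟨x, hx, hxρ⟩ := h
  have hone : x.reag.countP (fun y => y.isRight) = 1 := by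
    simp only [phosNetwork, Finset.mem_union, Finset.mem_image] at hx
    rcases hx with ⟨p, -, rfl⟩ | ⟨p, -, rfl⟩ <;>
      simp [← Multiset.cons_zero, Multiset.countP_cons]
  simp only [hxρ, Multiset.countP_cons, Sum.isRight_inr, if_true, add_eq_right,
    Multiset.countP_eq_zero] at hone
  rintro (⟨⟨⟩⟩ | w) hw
  · rfl
  · exact absurd rfl (hone _ hw)

end Phosphorylation

theorem isSE_phosphorylation_general (n : ℕ) (r₁ r₂ : ℝ) :
    isSE (phosSetoid n) (phosNetwork n r₁ r₂) := by
  rintro (⟨⟨⟩⟩ | u) (⟨⟨⟩⟩ | v) hs ρ hρ π₀ -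
  · rfl
  · exact absurd hs Sum.inl_ne_inr
  · exact absurd hs Sum.inr_ne_inl
  obtain ⟨τ, rfl⟩ := exists_perm_comp_eq_of_card_true_eq (phosSetoid_inr_iff.1 hs)
  have hρK : ∀ y ∈ ρ, y = Sum.inl () :=
    hρ.elim eq_inl_of_inr_cons_mem_reags eq_inl_of_inr_cons_mem_reags
  have hfix : ρ.map (relabel τ) = ρ := by
    conv_rhs => rw [← Multiset.map_id ρ]
    exact Multiset.map_congr rfl fun y hy => by simp [hρK y hy]
  have hmap : (Sum.inr u ::ₘ ρ).map (relabel τ) = Sum.inr (u ∘ τ) ::ₘ ρ := by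
    rw [Multiset.map_cons, relabel_inr, hfix]
  rw [← hmap]
  exact (rrSet_map (map_relabel_mem_phosNetwork_iff r₁ r₂ τ)
    (mlift_map_right_iff (phosSetoid_relabel τ) π₀) _).symm

/-- SE of the random-mechanism multisite phosphorylation network. -/
theorem isSE_phosphorylation (n : ℕ) (hn : 1 ≤ n) (r₁ r₂ : ℝ)
    (h₁ : 0 < r₁) (h₂ : 0 < r₂) :
    isSE (phosSetoid n) (phosNetwork n r₁ r₂) :=
  isSE_phosphorylation_general n r₁ r₂

end
end

section
/- (SE is strictly coarser than syntactic Markovian bisimulation.) Consider the reaction network over the two-element species type {S₁, S₂} consisting of the single reaction S₁ →(1) S₂. Then the equivalence relation whose unique class is {S₁, S₂} is a species equivalence for this network, but it is not a syntactic Markovian bisimulation for it. -/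
open Classical

noncomputable section

variable {S : Type*}

section Aux

lemma mlift_top_iff (σ σ' : Multiset (Fin 2)) :
    mlift (⊤ : Setoid (Fin 2)) σ σ' ↔ Multiset.card σ = Multiset.card σ' := by
  have hfil : ∀ τ : Multiset (Fin 2), ∀ s : Fin 2,
      classCount (⊤ : Setoid (Fin 2)) s τ = Multiset.card τ := by
    intro τ s
    have h : ∀ x ∈ τ, @Setoid.r (Fin 2) ⊤ s x := fun x _ => trivial
    unfold classCount
    rw [Multiset.filter_eq_self.2 h]
  constructor
  · intro h
    have := h 0
    rwa [hfil, hfil] at this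
  · intro h s
    rw [hfil, hfil, h]

lemma Prods_ex : Prods ({⟨{0}, 1, {1}⟩} : Finset (Reaction (Fin 2))) = {({1} : Multiset (Fin 2))} := by
  simp [Prods]

lemma Reags_ex : Reags ({⟨{0}, 1, {1}⟩} : Finset (Reaction (Fin 2))) = {({0} : Multiset (Fin 2))} := by
  simp [Reags]

lemma rrOff_ex (ρ π : Multiset (Fin 2)) :
    rrOff ({⟨{0}, 1, {1}⟩} : Finset (Reaction (Fin 2))) ρ π
      = if ρ = {0} ∧ π = {1} then 1 else 0 := by
  unfold rrOff
  rw [Finset.filter_singleton]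
  by_cases h : ρ = {0} ∧ π = {1}
  · rw [if_pos h, if_pos (by simp [h.1, h.2]), Finset.sum_singleton]
  · rw [if_neg (fun hc => h ⟨hc.1.symm, hc.2.symm⟩), if_neg h, Finset.sum_empty]

lemma mem_B (τ : Multiset (Fin 2)) (hτ : Multiset.card τ = 1) :
    τ ∈ {π | mlift (⊤ : Setoid (Fin 2)) ({1} : Multiset (Fin 2)) π} := by
  exact (mlift_top_iff _ _).2 (by simpa using hτ.symm)

lemma lemA (x : Fin 2) :
    rrSet ({⟨{0}, 1, {1}⟩} : Finset (Reaction (Fin 2))) {x}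
      {π | mlift (⊤ : Setoid (Fin 2)) ({1} : Multiset (Fin 2)) π} = 0 := by
  have hx : x = 0 ∨ x = 1 := by fin_cases x <;> simp
  unfold rrSet
  rw [Prods_ex]
  have h1 : ({0} : Multiset (Fin 2)) ∉ ({({1} : Multiset (Fin 2))} : Finset (Multiset (Fin 2))) := by simp
  have h2 : ({1} : Multiset (Fin 2)) ∈ ({({1} : Multiset (Fin 2))} : Finset (Multiset (Fin 2))) := by simp
  rcases hx with rfl | rfl
  · rw [Finset.filter_insert, if_pos (mem_B _ (by decide)),
        Finset.filter_singleton, if_pos (mem_B _ (by decide))]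
    simp [Finset.sum_insert, rr, Prods_ex, rrOff_ex, Finset.erase_eq_of_notMem h1]
  · rw [Finset.filter_insert, if_pos (mem_B _ (by decide)),
        Finset.filter_singleton, if_pos (mem_B _ (by decide))]
    simp [rr, Prods_ex, rrOff_ex]

end Aux

/-- SE is strictly coarser than syntactic Markovian bisimulation:
for the network with the single reaction `S₁ →(1) S₂` over the two-element species type,
the equivalence with the unique class `{S₁,S₂}` is an SE but not an SMB. -/
theorem isSE_not_isSMB_example :
    isSE (⊤ : Setoid (Fin 2)) ({⟨{0}, 1, {1}⟩} : Finset (Reaction (Fin 2))) ∧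
    ¬ isSMB (⊤ : Setoid (Fin 2)) ({⟨{0}, 1, {1}⟩} : Finset (Reaction (Fin 2))) := by
  constructor
  · intro s s' _ ρ hmem π₀ hπ₀
    rw [Prods_ex, Finset.mem_singleton] at hπ₀
    subst hπ₀
    rw [Reags_ex] at hmem
    have hρ : ρ = 0 := by
      rcases hmem with h | h <;>
      · rw [Finset.mem_singleton] at h
        have := congrArg Multiset.card h
        simp at this
        exact this
    subst hρ
    rw [show (s ::ₘ (0 : Multiset (Fin 2))) = {s} from rfl,
        show (s' ::ₘ (0 : Multiset (Fin 2))) = {s'} from rfl,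
        lemA, lemA]
  · intro h
    have := h 0 1 trivial 0 {1}
    rw [show ((0:Fin 2) ::ₘ (0 : Multiset (Fin 2))) = {(0:Fin 2)} from rfl,
        show ((1:Fin 2) ::ₘ (0 : Multiset (Fin 2))) = {(1:Fin 2)} from rfl] at this
    unfold rrSMBSet at this
    rw [Prods_ex, Finset.filter_singleton, if_pos (mem_B _ (by decide)),
        Finset.sum_singleton, Finset.sum_singleton, rrOff_ex, rrOff_ex] at this
    norm_num at this


end
end
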